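/- arXiv:1702.08539 — 2 statements merged into one kernel-verified Lean document; each statement's English description precedes it below -/
import Mathlib

section
/- (Truncated moment problem on [-ε,ε], even case.) Let k ≥ 1 be a natural number, let ε > 0, and let t = (t_0, t_1, …, t_{2k}) be a real sequence with t_0 = 1. Then there exists a Borel probability measure μ on ℝ with μ([-ε,ε]) = 1 such that t_j = ∫ y^j dμ(y) for every j ∈ {1, …, 2k} if and only if the Hankel matrix M(0, 2k, t) is positive semidefinite and the matrix ε²·M(0, 2k−2, t) − M(2, 2k, t) is positive semidefinite. -/
/-!
If `μ` lives on `[-ε, ε]`, the quadratic forms of the two Hankel matrices are `∫ P² dμ` and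
`∫ (ε² - x²) Q² dμ`, which gives necessity. Conversely, the two conditions say that the Riesz
functional `L(xʲ) = tⱼ` is nonnegative on `P²` (`deg P ≤ k`) and on `(ε² - x²) Q²`
(`deg Q ≤ k - 1`). By Lukács' theorem every polynomial of degree `≤ 2k` that is nonnegative on
`[-ε, ε]` is a sum of such terms, so `L` is nonnegative on all of them. Then `(t₁, …, t₂ₖ)` lies in
the (compact) convex hull of the moment curve `x ↦ (x, …, x²ᵏ)` over `[-ε, ε]`, since a separating
hyperplane would be a polynomial of that kind with `L < 0`; a convex combination of points of the
curve is the moment vector of a finitely supported probability measure.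

Lukács' theorem reduces, by the substitution `x = ε (1 - u) / (1 + u)`, to polynomials `g`
nonnegative on `[0, ∞)`: writing `g(s²) = A(s)² + B(s)²` (a nonnegative real polynomial is a sum
of two squares) and splitting `A`, `B` into even and odd parts gives
`g = A₀² + B₀² + u (A₁² + B₁²)`.
-/

open MeasureTheory

/-- The Hankel matrix `M(k, k+2h, t)`: the `(h+1) × (h+1)` matrix whose `(i,j)` entry
is `t (k + i + j)`. -/
def hankel (t : ℕ → ℝ) (k h : ℕ) : Matrix (Fin (h + 1)) (Fin (h + 1)) ℝ :=
  Matrix.of fun i j => t (k + (i : ℕ) + (j : ℕ))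

open Polynomial Set Matrix

namespace Polynomial

lemma eval_nonneg_of_forall_ne {g : ℝ[X]} (a : ℝ) (h : ∀ x ≠ a, 0 ≤ g.eval x) (x : ℝ) :
    0 ≤ g.eval x := by
  have hclosed : IsClosed {x | 0 ≤ g.eval x} := isClosed_le continuous_const g.continuous
  have hsub : {a}ᶜ ⊆ {x | 0 ≤ g.eval x} := fun y hy => h y hy
  exact hclosed.closure_subset_iff.mpr hsub (by simp [(dense_compl_singleton a).closure_eq])

lemma X_sub_C_sq_dvd_of_nonneg {f : ℝ[X]} (hf : ∀ x, 0 ≤ f.eval x) {r : ℝ} (hr : f.IsRoot r) :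
    (X - C r) ^ 2 ∣ f := by
  rcases eq_or_ne f 0 with rfl | hf0
  · exact dvd_zero _
  have hmin : IsLocalMin (fun x => f.eval x) r :=
    Filter.Eventually.of_forall fun x => by simpa [hr.eq_zero] using hf x
  have hderiv : f.derivative.IsRoot r := by
    simpa [Polynomial.deriv] using hmin.deriv_eq_zero
  rw [← le_rootMultiplicity_iff hf0]
  exact (one_lt_rootMultiplicity_iff_isRoot hf0).mpr ⟨hr, hderiv⟩

lemma exists_sq_add_C_sq_dvd_of_nonneg {f : ℝ[X]} (hf : ∀ x, 0 ≤ f.eval x) (hdeg : 0 < f.degree) :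
    ∃ a b : ℝ, (X - C a) ^ 2 + C b ^ 2 ∣ f := by
  obtain ⟨z, hz⟩ := IsAlgClosed.exists_aeval_eq_zero ℂ f hdeg.ne'
  by_cases him : z.im = 0
  · refine ⟨z.re, 0, ?_⟩
    have hzre : z = algebraMap ℝ ℂ z.re := Complex.ext rfl (by simp [him])
    rw [hzre, aeval_algebraMap_apply, coe_aeval_eq_eval] at hz
    simpa using X_sub_C_sq_dvd_of_nonneg hf (by simpa using hz)
  · refine ⟨z.re, z.im, ?_⟩
    convert f.quadratic_dvd_of_aeval_eq_zero_im_ne_zero hz him using 1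
    rw [Complex.sq_norm, Complex.normSq_apply]
    simp only [map_add, map_mul, map_ofNat]
    ring

theorem exists_eq_sq_add_sq_of_nonneg {f : ℝ[X]} (hf : ∀ x, 0 ≤ f.eval x) :
    ∃ A B : ℝ[X], f = A ^ 2 + B ^ 2 ∧ 2 * A.natDegree ≤ f.natDegree ∧
      2 * B.natDegree ≤ f.natDegree := by
  induction hn : f.natDegree using Nat.strong_induction_on generalizing f with
  | _ n ih =>
  rcases Nat.eq_zero_or_pos n with rfl | hpos
  · refine ⟨C √(f.coeff 0), 0, ?_, by simp, by simp⟩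
    rw [eq_C_of_natDegree_eq_zero hn] at hf ⊢
    rw [← C_pow, Real.sq_sqrt (by simpa using hf 0)]
    simp
  obtain ⟨a, b, g, rfl⟩ := exists_sq_add_C_sq_dvd_of_nonneg hf
    (natDegree_pos_iff_degree_pos.mp (hn ▸ hpos))
  have hq : ((X - C a) ^ 2 + C b ^ 2 : ℝ[X]).natDegree = 2 := by compute_degree!
  have hg0 : g ≠ 0 := by rintro rfl; simp at hn; omega
  have hdeg : n = g.natDegree + 2 := by
    rw [← hn, natDegree_mul (by rintro h; simp [h] at hq) hg0, hq, add_comm]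
  have hqpos : ∀ x ≠ a, 0 < ((X - C a) ^ 2 + C b ^ 2 : ℝ[X]).eval x := fun x hx => by
    simp only [eval_add, eval_pow, eval_sub, eval_X, eval_C]
    have : x - a ≠ 0 := sub_ne_zero.mpr hx
    positivity
  have hg : ∀ x, 0 ≤ g.eval x := eval_nonneg_of_forall_ne a fun x hx =>
    nonneg_of_mul_nonneg_right (by simpa using hf x) (hqpos x hx)
  obtain ⟨A, B, rfl, hA, hB⟩ := ih g.natDegree (by omega) hg rfl
  refine ⟨(X - C a) * A - C b * B, (X - C a) * B + C b * A, by ring, ?_, ?_⟩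
  · have : ((X - C a) * A - C b * B).natDegree ≤ max A.natDegree B.natDegree + 1 := by
      compute_degree; omega
    omega
  · have : ((X - C a) * B + C b * A).natDegree ≤ max A.natDegree B.natDegree + 1 := by
      compute_degree; omega
    omega

lemma eq_expand_contract_add_X_mul_expand_contract_divX {R : Type*} [CommSemiring R] (A : R[X]) :
    A = expand R 2 (contract 2 A) + X * expand R 2 (contract 2 A.divX) := by
  ext n
  rcases Nat.even_or_odd' n with ⟨m, rfl | rfl⟩
  · rcases m with _ | m
    · simp [coeff_expand, coeff_contract]
    · rw [show 2 * (m + 1) = m * 2 + 1 + 1 by ring]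
      simp [coeff_expand, coeff_contract, coeff_X_mul, show ¬ 2 ∣ m * 2 + 1 by omega,
        show (m * 2 + 1 + 1) / 2 = m + 1 by omega]
      ring_nf
  · simp [coeff_expand, coeff_contract, coeff_X_mul, coeff_divX, show ¬ 2 ∣ 2 * m + 1 by omega]
    ring_nf

lemma natDegree_contract_le {R : Type*} [CommSemiring R] {p : ℕ} (hp : p ≠ 0) (f : R[X]) :
    (contract p f).natDegree ≤ f.natDegree / p := by
  refine natDegree_le_iff_coeff_eq_zero.mpr fun n hn => ?_
  rw [coeff_contract hp]
  exact coeff_eq_zero_of_natDegree_lt ((Nat.div_lt_iff_lt_mul (Nat.pos_of_ne_zero hp)).mp hn)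

theorem exists_eq_sq_add_sq_add_X_mul_of_nonneg_on_Ici {g : ℝ[X]} {k : ℕ}
    (hg : ∀ u, 0 ≤ u → 0 ≤ g.eval u) (hdeg : g.natDegree ≤ 2 * k) :
    ∃ A₀ B₀ A₁ B₁ : ℝ[X], A₀.natDegree ≤ k ∧ B₀.natDegree ≤ k ∧ A₁.natDegree ≤ k - 1 ∧
      B₁.natDegree ≤ k - 1 ∧ g = A₀ ^ 2 + B₀ ^ 2 + X * (A₁ ^ 2 + B₁ ^ 2) := by
  obtain ⟨A, B, hAB, hA, hB⟩ := exists_eq_sq_add_sq_of_nonneg (f := expand ℝ 2 g) fun s => by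
    rw [expand_eval]; exact hg _ (sq_nonneg s)
  rw [natDegree_expand] at hA hB
  have hsplit (P : ℝ[X]) (s : ℝ) :
      P.eval s = (contract 2 P).eval (s ^ 2) + s * (contract 2 P.divX).eval (s ^ 2) := by
    conv_lhs => rw [eq_expand_contract_add_X_mul_expand_contract_divX P]
    simp [expand_eval]
  have hdeg_even (P : ℝ[X]) (hP : P.natDegree ≤ 2 * k) : (contract 2 P).natDegree ≤ k :=
    (natDegree_contract_le two_ne_zero P).trans (by omega)
  have hdeg_odd (P : ℝ[X]) (hP : P.natDegree ≤ 2 * k) : (contract 2 P.divX).natDegree ≤ k - 1 :=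
    (natDegree_contract_le two_ne_zero _).trans
      (by rw [natDegree_divX_eq_natDegree_tsub_one]; omega)
  refine ⟨contract 2 A, contract 2 B, contract 2 A.divX, contract 2 B.divX, hdeg_even A (by omega),
    hdeg_even B (by omega), hdeg_odd A (by omega), hdeg_odd B (by omega), ?_⟩
  -- `g(s²)` is the even part of `A(s)² + B(s)²`
  refine expand_injective two_pos (Polynomial.funext fun s => ?_)
  have hpos := congrArg (eval s) hAB
  have hneg := congrArg (eval (-s)) hAB
  simp only [expand_eval, eval_add, eval_pow, hsplit A, hsplit B, neg_sq] at hpos hneg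
  simp only [expand_eval, map_add, map_mul, map_pow, expand_X, eval_add, eval_mul, eval_pow,
    eval_X]
  linear_combination (hpos + hneg) / 2

noncomputable def homogenizeComp {R : Type*} [CommSemiring R] (n : ℕ) (p u v : R[X]) : R[X] :=
  ∑ j ∈ Finset.range (n + 1), C (p.coeff j) * u ^ j * v ^ (n - j)

lemma eval_homogenizeComp {K : Type*} [Field K] {n : ℕ} {p : K[X]} (hp : p.natDegree ≤ n)
    (u v : K[X]) {x : K} (hx : v.eval x ≠ 0) :
    (homogenizeComp n p u v).eval x = v.eval x ^ n * p.eval (u.eval x / v.eval x) := by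
  rw [homogenizeComp, eval_finsetSum, eval_eq_sum_range' (Nat.lt_succ_of_le hp), Finset.mul_sum]
  refine Finset.sum_congr rfl fun j hj => ?_
  rw [← Nat.sub_add_cancel (Nat.lt_succ_iff.mp (Finset.mem_range.mp hj))]
  simp only [eval_mul, eval_pow, eval_C, Nat.add_sub_cancel, div_pow]
  field_simp
  ring

lemma natDegree_homogenizeComp_le {R : Type*} [CommSemiring R] {n d : ℕ} (p : R[X]) {u v : R[X]}
    (hu : u.natDegree ≤ d) (hv : v.natDegree ≤ d) : (homogenizeComp n p u v).natDegree ≤ n * d := by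
  refine natDegree_sum_le_of_forall_le _ _ fun j hj => ?_
  have hjn : j ≤ n := Nat.lt_succ_iff.mp (Finset.mem_range.mp hj)
  refine (natDegree_mul_le_of_le ((natDegree_C_mul_le _ _).trans (natDegree_pow_le_of_le j hu))
    (natDegree_pow_le_of_le (n - j) hv)).trans (le_of_eq ?_)
  rw [← add_mul, Nat.add_sub_cancel' hjn]

lemma eval_homogenizeComp_nonneg_of_nonneg_on_Icc {ε : ℝ} (hε : 0 ≤ ε) {n : ℕ} {p : ℝ[X]}
    (hdeg : p.natDegree ≤ n) (hp : ∀ x ∈ Icc (-ε) ε, 0 ≤ p.eval x) {u : ℝ} (hu : 0 ≤ u) :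
    0 ≤ (homogenizeComp n p (C ε * (1 - X)) (1 + X)).eval u := by
  have hu1 : 0 < 1 + u := by linarith
  rw [eval_homogenizeComp hdeg _ _ (by simpa using hu1.ne')]
  simp only [eval_add, eval_mul, eval_sub, eval_one, eval_C, eval_X]
  refine mul_nonneg (by positivity) (hp _ ⟨?_, ?_⟩)
  · rw [le_div_iff₀ hu1]; nlinarith
  · rw [div_le_iff₀ hu1]; nlinarith

lemma pow_mul_eval_eq_eval_homogenizeComp {ε x : ℝ} (hε : ε ≠ 0) (hx : ε + x ≠ 0) {n : ℕ}
    {p : ℝ[X]} (hdeg : p.natDegree ≤ n) :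
    (2 * ε) ^ n * p.eval x =
      (ε + x) ^ n * (homogenizeComp n p (C ε * (1 - X)) (1 + X)).eval ((ε - x) / (ε + x)) := by
  have hu1 : 1 + (ε - x) / (ε + x) = 2 * ε / (ε + x) := by field_simp; ring
  rw [eval_homogenizeComp hdeg _ _ (by simp [hu1, hε, hx])]
  simp only [eval_add, eval_mul, eval_sub, eval_one, eval_C, eval_X, hu1]
  rw [show ε * (1 - (ε - x) / (ε + x)) / (2 * ε / (ε + x)) = x by field_simp; ring, div_pow]
  field_simp

theorem exists_eq_sq_add_sq_add_mul_of_nonneg_on_Icc {ε : ℝ} (hε : 0 < ε) {k : ℕ} (hk : 1 ≤ k)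
    {p : ℝ[X]} (hdeg : p.natDegree ≤ 2 * k) (hp : ∀ x ∈ Icc (-ε) ε, 0 ≤ p.eval x) :
    ∃ P₁ P₂ Q₁ Q₂ : ℝ[X], P₁.natDegree ≤ k ∧ P₂.natDegree ≤ k ∧ Q₁.natDegree ≤ k - 1 ∧
      Q₂.natDegree ≤ k - 1 ∧ p = P₁ ^ 2 + P₂ ^ 2 + (C (ε ^ 2) - X ^ 2) * (Q₁ ^ 2 + Q₂ ^ 2) := by
  -- the substitution `x = ε (1 - u) / (1 + u)` maps `[0, ∞)` onto `(-ε, ε]`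
  have hgdeg : (homogenizeComp (2 * k) p (C ε * (1 - X)) (1 + X)).natDegree ≤ 2 * k :=
    (natDegree_homogenizeComp_le (d := 1) p (by compute_degree!) (by compute_degree!)).trans
      (by rw [mul_one])
  obtain ⟨A₀, B₀, A₁, B₁, hA₀, hB₀, hA₁, hB₁, hg⟩ := exists_eq_sq_add_sq_add_X_mul_of_nonneg_on_Ici
    (fun u hu => eval_homogenizeComp_nonneg_of_nonneg_on_Icc hε.le hdeg hp hu) hgdeg
  let T (n : ℕ) (A : ℝ[X]) : ℝ[X] :=
    C ((2 * ε) ^ k)⁻¹ * homogenizeComp n A (C ε - X) (C ε + X)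
  have hT_deg (n : ℕ) (A : ℝ[X]) : (T n A).natDegree ≤ n :=
    (natDegree_C_mul_le _ _).trans ((natDegree_homogenizeComp_le (d := 1) A (by compute_degree!)
      (by compute_degree!)).trans (by rw [mul_one]))
  refine ⟨T k A₀, T k B₀, T (k - 1) A₁, T (k - 1) B₁, hT_deg _ _, hT_deg _ _, hT_deg _ _,
    hT_deg _ _, eq_of_infinite_eval_eq _ _ ((Ioi_infinite (-ε)).mono fun x (hx : -ε < x) => ?_)⟩
  have hw : 0 < ε + x := by linarith
  set u := (ε - x) / (ε + x)
  have hT (n : ℕ) (A : ℝ[X]) (hA : A.natDegree ≤ n) :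
      (T n A).eval x = ((2 * ε) ^ k)⁻¹ * ((ε + x) ^ n * A.eval u) := by
    simp only [T, eval_mul, eval_C]
    rw [eval_homogenizeComp hA _ _ (by simpa using hw.ne')]
    simp [u]
  have hpx := pow_mul_eval_eq_eval_homogenizeComp hε.ne' hw.ne' hdeg
  rw [hg] at hpx
  simp only [eval_add, eval_mul, eval_pow, eval_X] at hpx
  rw [mem_ofPred_eq, eq_inv_mul_iff_mul_eq₀ (by positivity) |>.mpr hpx]
  simp only [eval_add, eval_mul, eval_pow, eval_sub, eval_C, eval_X]
  rw [hT _ _ hA₀, hT _ _ hB₀, hT _ _ hA₁, hT _ _ hB₁]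
  obtain ⟨m, rfl⟩ : ∃ m, k = m + 1 := ⟨k - 1, by omega⟩
  have huw : u * (ε + x) = ε - x := div_mul_cancel₀ _ hw.ne'
  rw [Nat.add_sub_cancel]
  linear_combination (((2 * ε) ^ (m + 1))⁻¹ ^ 2 * (A₁.eval u ^ 2 + B₁.eval u ^ 2) *
    (ε + x) ^ (2 * m + 1)) * huw

end Polynomial

noncomputable def rieszFunctional (t : ℕ → ℝ) : ℝ[X] →ₗ[ℝ] ℝ :=
  lsum fun n => t n • LinearMap.id

section rieszFunctional

variable (t : ℕ → ℝ)

lemma rieszFunctional_apply (p : ℝ[X]) : rieszFunctional t p = p.sum fun n a => t n * a := by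
  simp [rieszFunctional, lsum_apply]

lemma rieszFunctional_monomial (n : ℕ) (a : ℝ) : rieszFunctional t (monomial n a) = t n * a := by
  simp [rieszFunctional_apply]

lemma rieszFunctional_C_sub_X_sq_mul (c : ℝ) (p : ℝ[X]) :
    rieszFunctional t ((C c - X ^ 2) * p) = rieszFunctional (fun n => c * t n - t (n + 2)) p := by
  induction p using Polynomial.induction_on' with
  | add p q hp hq => simp only [mul_add, map_add, hp, hq]
  | monomial n a =>
    simp only [sub_mul, C_mul_monomial, X_pow_mul_monomial, map_sub, rieszFunctional_monomial]
    ring_nf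

lemma rieszFunctional_eq_integral {μ : Measure ℝ} {n : ℕ}
    (hint : ∀ j ≤ n, Integrable (fun x => x ^ j) μ) (hmom : ∀ j ≤ n, t j = ∫ x, x ^ j ∂μ)
    {p : ℝ[X]} (hp : p.natDegree ≤ n) : rieszFunctional t p = ∫ x, p.eval x ∂μ := by
  simp_rw [rieszFunctional_apply, sum_over_range' p (fun _ => mul_zero _) (n + 1)
    (Nat.lt_succ_of_le hp), eval_eq_sum_range' (Nat.lt_succ_of_le hp)]
  rw [integral_finsetSum _ fun j hj => (hint j (Finset.mem_range_succ_iff.mp hj)).const_mul _]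
  refine Finset.sum_congr rfl fun j hj => ?_
  rw [integral_const_mul, hmom j (Finset.mem_range_succ_iff.mp hj), mul_comm]

lemma hankel_isHermitian (k h : ℕ) : (hankel t k h).IsHermitian := by
  ext i j
  simp [hankel, add_right_comm]

lemma smul_hankel_sub_hankel (c : ℝ) (h : ℕ) :
    c • hankel t 0 h - hankel t 2 h = hankel (fun n => c * t n - t (n + 2)) 0 h := by
  ext i j
  simp [hankel, add_comm 2, add_assoc]

lemma dotProduct_hankel_mulVec (h : ℕ) (x : Fin (h + 1) → ℝ) :
    star x ⬝ᵥ (hankel t 0 h *ᵥ x) = rieszFunctional t (ofFn (h + 1) x ^ 2) := by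
  rw [sq, ofFn_eq_sum_monomial, Finset.sum_mul_sum]
  simp only [monomial_mul_monomial, map_sum, rieszFunctional_monomial, dotProduct, mulVec, hankel,
    of_apply, star_trivial, Finset.mul_sum]
  refine Finset.sum_congr rfl fun i _ => Finset.sum_congr rfl fun j _ => ?_
  rw [zero_add]
  ring

theorem hankel_posSemidef_iff (h : ℕ) :
    (hankel t 0 h).PosSemidef ↔ ∀ P : ℝ[X], P.natDegree ≤ h → 0 ≤ rieszFunctional t (P ^ 2) := by
  refine ⟨fun hpsd P hP => ?_, fun hP => .of_dotProduct_mulVec_nonneg (hankel_isHermitian t 0 h)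
    fun x => (dotProduct_hankel_mulVec t h x).symm ▸ hP _ (Nat.lt_succ_iff.mp
      (ofFn_natDegree_lt (Nat.succ_pos h) x))⟩
  rw [← ofFn_comp_toFn_eq_id_of_natDegree_lt (Nat.lt_succ_of_le hP), ← dotProduct_hankel_mulVec]
  exact hpsd.dotProduct_mulVec_nonneg _

end rieszFunctional

theorem rieszFunctional_nonneg_of_nonneg_on_Icc {t : ℕ → ℝ} {ε : ℝ} (hε : 0 < ε) {k : ℕ}
    (hk : 1 ≤ k) (h₀ : (hankel t 0 k).PosSemidef)
    (h₁ : (ε ^ 2 • hankel t 0 (k - 1) - hankel t 2 (k - 1)).PosSemidef) {p : ℝ[X]}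
    (hdeg : p.natDegree ≤ 2 * k) (hp : ∀ x ∈ Icc (-ε) ε, 0 ≤ p.eval x) :
    0 ≤ rieszFunctional t p := by
  rw [hankel_posSemidef_iff] at h₀
  rw [smul_hankel_sub_hankel, hankel_posSemidef_iff] at h₁
  obtain ⟨P₁, P₂, Q₁, Q₂, hP₁, hP₂, hQ₁, hQ₂, rfl⟩ :=
    exists_eq_sq_add_sq_add_mul_of_nonneg_on_Icc hε hk hdeg hp
  simp only [mul_add, map_add, rieszFunctional_C_sub_X_sq_mul]
  exact add_nonneg (add_nonneg (h₀ _ hP₁) (h₀ _ hP₂)) (add_nonneg (h₁ _ hQ₁) (h₁ _ hQ₂))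

theorem hankel_posSemidef_of_ae_mem_Icc {t : ℕ → ℝ} {ε : ℝ} {k : ℕ} (hk : 1 ≤ k)
    {μ : Measure ℝ} [IsFiniteMeasure μ] (hμ : ∀ᵐ x ∂μ, x ∈ Icc (-ε) ε)
    (hmom : ∀ j ≤ 2 * k, t j = ∫ x, x ^ j ∂μ) :
    (hankel t 0 k).PosSemidef ∧ (ε ^ 2 • hankel t 0 (k - 1) - hankel t 2 (k - 1)).PosSemidef := by
  have hint (j : ℕ) : Integrable (fun x => x ^ j) μ := by
    rw [← Measure.restrict_eq_self_of_ae_mem hμ]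
    exact (continuous_pow j).integrableOn_Icc
  have hL {p : ℝ[X]} (hp : p.natDegree ≤ 2 * k) : rieszFunctional t p = ∫ x, p.eval x ∂μ :=
    rieszFunctional_eq_integral t (fun j _ => hint j) hmom hp
  rw [hankel_posSemidef_iff, smul_hankel_sub_hankel, hankel_posSemidef_iff]
  refine ⟨fun P hP => ?_, fun Q hQ => ?_⟩
  · rw [hL (by compute_degree; omega)]
    exact integral_nonneg fun x => by simp only [eval_pow]; positivity
  · rw [← rieszFunctional_C_sub_X_sq_mul, hL (by compute_degree; omega)]
    refine integral_nonneg_of_ae (hμ.mono fun x hx => ?_)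
    simp only [eval_mul, eval_sub, eval_C, eval_pow, eval_X, Pi.zero_apply]
    exact mul_nonneg (by nlinarith [hx.1, hx.2]) (sq_nonneg _)

theorem IsCompact.convexHull {E : Type*} [AddCommGroup E] [Module ℝ E] [TopologicalSpace E]
    [IsTopologicalAddGroup E] [ContinuousSMul ℝ E] [FiniteDimensional ℝ E] {s : Set E}
    (hs : IsCompact s) : IsCompact (_root_.convexHull ℝ s) := by
  -- by Carathéodory, it suffices to take convex combinations of `finrank + 1` points of `s`
  let Φ (m : ℕ) (p : (Fin m → ℝ) × (Fin m → E)) : E := ∑ i, p.1 i • p.2 i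
  have hΦ : _root_.convexHull ℝ s =
      ⋃ m : Fin (Module.finrank ℝ E + 2), Φ m '' (stdSimplex ℝ (Fin m) ×ˢ univ.pi fun _ => s) := by
    refine Subset.antisymm (fun x hx => ?_) (iUnion_subset fun m => image_subset_iff.mpr
      fun p ⟨hw, hz⟩ => (convex_convexHull ℝ s).sum_mem (fun i _ => hw.1 i) hw.2
        fun i _ => subset_convexHull ℝ s (hz i (mem_univ i)))
    obtain ⟨ι, _, z, w, hzs, hind, hw0, hw1, rfl⟩ := eq_pos_convex_span_of_mem_convexHull hx
    have hcard : Fintype.card ι < Module.finrank ℝ E + 2 :=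
      Nat.lt_succ_of_le (hind.card_le_finrank_succ.trans (by simpa using Submodule.finrank_le _))
    let e := Fintype.equivFin ι
    refine mem_iUnion.mpr ⟨⟨_, hcard⟩, (w ∘ e.symm, z ∘ e.symm), ⟨⟨fun i => (hw0 _).le, ?_⟩,
      fun i _ => hzs (mem_range_self _)⟩, ?_⟩
    · simpa [Function.comp_def, e.symm.sum_comp w] using hw1
    · exact e.symm.sum_comp fun i => w i • z i
  rw [hΦ]
  exact isCompact_iUnion fun m => ((isCompact_stdSimplex ℝ (Fin m)).prod
    (isCompact_univ_pi fun _ => hs)).image (by fun_prop)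

def momentCurve (n : ℕ) (x : ℝ) : Fin n → ℝ := fun i => x ^ ((i : ℕ) + 1)

theorem mem_convexHull_momentCurve_of_rieszFunctional_nonneg {S : Set ℝ} (hS : IsCompact S)
    {n : ℕ} {t : ℕ → ℝ} (ht0 : t 0 = 1)
    (hpos : ∀ p : ℝ[X], p.natDegree ≤ n → (∀ x ∈ S, 0 ≤ p.eval x) → 0 ≤ rieszFunctional t p) :
    (fun i : Fin n => t (i + 1)) ∈ convexHull ℝ (momentCurve n '' S) := by
  by_contra hv
  have hc : Continuous (momentCurve n) := continuous_pi fun _ => continuous_pow _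
  obtain ⟨f, u, hfv, hfS⟩ := geometric_hahn_banach_point_closed (convex_convexHull ℝ _)
    (hS.image hc).convexHull.isClosed hv
  -- the separating functional `f - u` is a polynomial of degree `≤ n` on the moment curve
  let a (i : Fin n) : ℝ := f fun j => if i = j then 1 else 0
  have hf (y : Fin n → ℝ) : f y = ∑ i, y i * a i := f.toLinearMap.pi_apply_eq_sum_univ y
  let p : ℝ[X] := ∑ i : Fin n, monomial (i + 1) (a i) - C u
  have hp_deg : p.natDegree ≤ n := natDegree_sub_le_of_le
    (natDegree_sum_le_of_forall_le _ _ fun i _ => (natDegree_monomial_le _).trans i.isLt)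
    (natDegree_C u).le |>.trans (max_le le_rfl (Nat.zero_le n))
  have hp_eval (x : ℝ) : p.eval x = f (momentCurve n x) - u := by
    simp [p, hf, momentCurve, eval_finsetSum, mul_comm]
  have hp_L : rieszFunctional t p = f (fun i : Fin n => t (i + 1)) - u := by
    simp [p, hf, ← monomial_zero_left, rieszFunctional_monomial, ht0]
  have := hpos p hp_deg fun x hx => by
    rw [hp_eval]
    linarith [hfS _ (subset_convexHull ℝ _ (mem_image_of_mem _ hx))]
  linarith

theorem exists_measure_of_mem_convexHull_momentCurve {S : Set ℝ} {n : ℕ} {v : Fin n → ℝ}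
    (hv : v ∈ convexHull ℝ (momentCurve n '' S)) :
    ∃ μ : Measure ℝ, IsProbabilityMeasure μ ∧ μ S = 1 ∧
      ∀ i : Fin n, v i = ∫ x, x ^ ((i : ℕ) + 1) ∂μ := by
  obtain ⟨ι, _, w, z, hw0, hw1, hz, rfl⟩ := mem_convexHull_iff_exists_fintype.mp hv
  choose y hyS hyz using hz
  have hw1' : ∑ i, ENNReal.ofReal (w i) = 1 := by
    rw [← ENNReal.ofReal_sum_of_nonneg fun i _ => hw0 i, hw1, ENNReal.ofReal_one]
  refine ⟨∑ i, ENNReal.ofReal (w i) • Measure.dirac (y i), ⟨by simpa using hw1'⟩,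
    by simpa [Measure.dirac_apply_of_mem (hyS _)] using hw1', fun j => ?_⟩
  rw [integral_finsetSum_measure fun i _ =>
    (integrable_dirac (by simp)).smul_measure ENNReal.ofReal_ne_top]
  simp [integral_smul_measure, ENNReal.toReal_ofReal (hw0 _), ← hyz, momentCurve]

theorem exists_measure_of_rieszFunctional_nonneg {S : Set ℝ} (hS : IsCompact S) {n : ℕ}
    {t : ℕ → ℝ} (ht0 : t 0 = 1)
    (hpos : ∀ p : ℝ[X], p.natDegree ≤ n → (∀ x ∈ S, 0 ≤ p.eval x) → 0 ≤ rieszFunctional t p) :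
    ∃ μ : Measure ℝ, IsProbabilityMeasure μ ∧ μ S = 1 ∧
      ∀ j, 1 ≤ j → j ≤ n → t j = ∫ x, x ^ j ∂μ := by
  obtain ⟨μ, hμ, hμS, hmom⟩ := exists_measure_of_mem_convexHull_momentCurve
    (mem_convexHull_momentCurve_of_rieszFunctional_nonneg hS ht0 hpos)
  refine ⟨μ, hμ, hμS, fun j hj hjn => ?_⟩
  obtain ⟨i, rfl⟩ : ∃ i : Fin n, j = i + 1 := ⟨⟨j - 1, by omega⟩, by simp; omega⟩
  exact hmom i

/-- Truncated moment problem on `[-ε, ε]`, even case. -/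
theorem truncated_moment_problem_even (k : ℕ) (hk : 1 ≤ k) (ε : ℝ) (hε : 0 < ε)
    (t : ℕ → ℝ) (ht0 : t 0 = 1) :
    (∃ μ : Measure ℝ, IsProbabilityMeasure μ ∧ μ (Set.Icc (-ε) ε) = 1 ∧
        ∀ j, 1 ≤ j → j ≤ 2 * k → t j = ∫ y, y ^ j ∂μ) ↔
      ((hankel t 0 k).PosSemidef ∧
        (ε ^ 2 • hankel t 0 (k - 1) - hankel t 2 (k - 1)).PosSemidef) := by
  constructor
  · rintro ⟨μ, hμ, hμS, hmom⟩
    have hae : ∀ᵐ x ∂μ, x ∈ Icc (-ε) ε :=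
      (ae_iff_measure_eq measurableSet_Icc.nullMeasurableSet).mpr (by rw [measure_univ]; exact hμS)
    refine hankel_posSemidef_of_ae_mem_Icc hk hae fun j hj => ?_
    rcases Nat.eq_zero_or_pos j with rfl | hj0
    · simp [ht0]
    · exact hmom j hj0 hj
  · rintro ⟨h₀, h₁⟩
    exact exists_measure_of_rieszFunctional_nonneg isCompact_Icc ht0 fun p hp hpos =>
      rieszFunctional_nonneg_of_nonneg_on_Icc hε hk h₀ h₁ hp hpos
end

section
/- (Schur complement reduction of the three-block step-size matrix.) Let n, m, p be positive natural numbers, let D_τ be a real n×n diagonal matrix with positive diagonal entries, let D_κ be a real m×m diagonal matrix with positive diagonal entries, let γ > 0, and let A be a real m×n matrix and B a real p×n matrix. Define the (n+m+p)×(n+m+p) real symmetric block matrix Q with block rows [D_τ, −Aᵀ, −Bᵀ], [−A, D_κ, 0], [−B, 0, (1/γ)·I_p]. Then Q is positive semidefinite if and only if the n×n matrix D_τ − γ·BᵀB − Aᵀ·D_κ⁻¹·A is positive semidefinite. -/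
/-!
The lower-right block `diag(D_κ, γ⁻¹ I)` is positive definite, so a single Schur complement with
respect to it reduces `Q` to `D_τ - Aᵀ D_κ⁻¹ A - γ BᵀB`; the block-diagonal shape makes the two
couplings contribute separately.
-/

open Matrix
open scoped ComplexOrder

namespace Matrix

variable {𝕜 : Type*} [RCLike 𝕜] {n m p : Type*} [Fintype n] [Fintype m] [Fintype p]
  [DecidableEq m] [DecidableEq p]

theorem PosDef.fromBlocks_zero {R : Matrix m m 𝕜} {S : Matrix p p 𝕜} (hR : R.PosDef)
    (hS : S.PosDef) : (fromBlocks R 0 0 S).PosDef := by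
  have := hR.isUnit.invertible
  have hpsd : (fromBlocks R 0 0 S).PosSemidef := by
    simpa using (hR.fromBlocks₁₁ (0 : Matrix m p 𝕜) S).mpr (by simpa using hS.posSemidef)
  rw [hpsd.posDef_iff_det_ne_zero, det_fromBlocks_zero₁₂]
  exact mul_ne_zero hR.det_pos.ne' hS.det_pos.ne'

theorem inv_fromBlocks_zero_zero {R : Matrix m m 𝕜} {S : Matrix p p 𝕜} (hR : IsUnit R)
    (hS : IsUnit S) : (fromBlocks R 0 0 S)⁻¹ = fromBlocks R⁻¹ 0 0 S⁻¹ := by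
  simp [inv_fromBlocks_zero₁₂_of_isUnit_iff, hR, hS]

theorem posSemidef_fromBlocks_fromCols_fromRows_iff (P : Matrix n n 𝕜) (X : Matrix m n 𝕜)
    (Y : Matrix p n 𝕜) {R : Matrix m m 𝕜} {S : Matrix p p 𝕜} (hR : R.PosDef) (hS : S.PosDef) :
    (fromBlocks P (fromCols Xᴴ Yᴴ) (fromRows X Y) (fromBlocks R 0 0 S)).PosSemidef ↔
      (P - Xᴴ * R⁻¹ * X - Yᴴ * S⁻¹ * Y).PosSemidef := by
  have hRS := hR.fromBlocks_zero hS
  have := hRS.isUnit.invertible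
  have hcols : (fromCols Xᴴ Yᴴ)ᴴ = fromRows X Y := by
    rw [conjTranspose_fromCols_eq_fromRows_conjTranspose, conjTranspose_conjTranspose,
      conjTranspose_conjTranspose]
  rw [← hcols, hRS.fromBlocks₂₂, hcols, inv_fromBlocks_zero_zero hR.isUnit hS.isUnit,
    fromCols_mul_fromBlocks, fromCols_mul_fromRows]
  simp [sub_sub]

end Matrix

theorem three_block_schur_reduction_general (n m p : ℕ)
    (dτ : Fin n → ℝ)
    (dκ : Fin m → ℝ) (hdκ : ∀ i, 0 < dκ i)
    (γ : ℝ) (hγ : 0 < γ)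
    (A : Matrix (Fin m) (Fin n) ℝ) (B : Matrix (Fin p) (Fin n) ℝ) :
    (Matrix.fromBlocks (Matrix.diagonal dτ)
        (Matrix.fromCols (-Aᵀ) (-Bᵀ))
        (Matrix.fromRows (-A) (-B))
        (Matrix.fromBlocks (Matrix.diagonal dκ) 0 0
          ((1 / γ) • (1 : Matrix (Fin p) (Fin p) ℝ)))).PosSemidef ↔
      (Matrix.diagonal dτ - γ • (Bᵀ * B) -
        Aᵀ * (Matrix.diagonal dκ)⁻¹ * A).PosSemidef := by
  have hDκ : (diagonal dκ).PosDef := posDef_diagonal_iff.mpr hdκ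
  have hG : ((1 / γ) • (1 : Matrix (Fin p) (Fin p) ℝ)).PosDef := by
    simpa [smul_one_eq_diagonal] using posDef_diagonal_iff.mpr fun _ : Fin p => inv_pos.mpr hγ
  have hGinv : ((1 / γ) • (1 : Matrix (Fin p) (Fin p) ℝ))⁻¹ = γ • 1 := by
    refine inv_eq_left_inv ?_
    rw [smul_mul_smul_comm, mul_one, mul_one_div_cancel hγ.ne', one_smul]
  have hschur := posSemidef_fromBlocks_fromCols_fromRows_iff (diagonal dτ) (-A) (-B) hDκ hG
  simp only [conjTranspose_eq_transpose_of_trivial, transpose_neg, hGinv] at hschur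
  rw [hschur, sub_right_comm]
  simp

/-- Schur complement reduction of the three-block step-size matrix. -/
theorem three_block_schur_reduction (n m p : ℕ) (hn : 0 < n) (hm : 0 < m) (hp : 0 < p)
    (dτ : Fin n → ℝ) (hdτ : ∀ i, 0 < dτ i)
    (dκ : Fin m → ℝ) (hdκ : ∀ i, 0 < dκ i)
    (γ : ℝ) (hγ : 0 < γ)
    (A : Matrix (Fin m) (Fin n) ℝ) (B : Matrix (Fin p) (Fin n) ℝ) :
    (Matrix.fromBlocks (Matrix.diagonal dτ)
        (Matrix.fromCols (-Aᵀ) (-Bᵀ))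
        (Matrix.fromRows (-A) (-B))
        (Matrix.fromBlocks (Matrix.diagonal dκ) 0 0
          ((1 / γ) • (1 : Matrix (Fin p) (Fin p) ℝ)))).PosSemidef ↔
      (Matrix.diagonal dτ - γ • (Bᵀ * B) -
        Aᵀ * (Matrix.diagonal dκ)⁻¹ * A).PosSemidef :=
  three_block_schur_reduction_general n m p dτ dκ hdκ γ hγ A B
end
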